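/- Every u ∈ V = V₁ ⊗_k V₂ satisfying (a) h·u = u for all h ∈ H, and (b) g·u = s·u for every s ∈ S and every g ∈ G whose class modulo H equals ι(s), lies in the line k·(v₁ ⊗ (1,0)). In particular, the subspace of all such vectors is at most one-dimensional over k. (The claim verified in the proof of Theorem 4.2 of the paper.) -/
import Mathlib

open scoped TensorProduct

section Aux

variable {k V₁ : Type*} [Field k] [AddCommGroup V₁] [Module k V₁]

/-- Coordinate extraction map on `V₁ ⊗ (k × k)` determined by a functional. -/
noncomputable def coordF (φ : (k × k) →ₗ[k] k) : (V₁ ⊗[k] (k × k)) →ₗ[k] V₁ :=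
  TensorProduct.lift
    { toFun := fun v => φ.smulRight v
      map_add' := by
        intro v w; refine LinearMap.ext fun ab => ?_; simp
      map_smul' := by
        intro c v; refine LinearMap.ext fun ab => ?_
        simpa using smul_comm (φ ab) c v }

@[simp] lemma coordF_tmul (φ : (k × k) →ₗ[k] k) (v : V₁) (ab : k × k) :
    coordF φ (v ⊗ₜ[k] ab) = φ ab • v := rfl

lemma coord_decomp (w : V₁ ⊗[k] (k × k)) :
    w = coordF (LinearMap.fst k k k) w ⊗ₜ[k] ((1, 0) : k × k)
      + coordF (LinearMap.snd k k k) w ⊗ₜ[k] ((0, 1) : k × k) := by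
  induction w using TensorProduct.induction_on with
  | zero => simp
  | tmul v ab =>
      simp only [coordF_tmul, LinearMap.fst_apply, LinearMap.snd_apply,
        TensorProduct.smul_tmul, ← TensorProduct.tmul_add]
      congr 1
      simp [Prod.ext_iff]
  | add x y hx hy =>
      conv_lhs => rw [hx, hy]
      rw [map_add, map_add, TensorProduct.add_tmul, TensorProduct.add_tmul]
      abel

lemma coordF_map_left (φ : (k × k) →ₗ[k] k) (A : V₁ →ₗ[k] V₁) (w : V₁ ⊗[k] (k × k)) :
    coordF φ (TensorProduct.map A LinearMap.id w) = A (coordF φ w) := by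
  induction w using TensorProduct.induction_on with
  | zero => simp
  | tmul v ab => simp
  | add x y hx hy => simp [hx, hy]

lemma coordF_map_right (φ : (k × k) →ₗ[k] k) (B : (k × k) →ₗ[k] (k × k))
    (w : V₁ ⊗[k] (k × k)) :
    coordF φ (TensorProduct.map LinearMap.id B w) = coordF (φ.comp B) w := by
  induction w using TensorProduct.induction_on with
  | zero => simp
  | tmul v ab => simp
  | add x y hx hy => simp [hx, hy]

lemma coordF_smul (c : k) (φ : (k × k) →ₗ[k] k) (w : V₁ ⊗[k] (k × k)) :
    coordF (c • φ) w = c • coordF φ w := by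
  induction w using TensorProduct.induction_on with
  | zero => simp
  | tmul v ab => simp [mul_smul]
  | add x y hx hy => simp [hx, hy, smul_add]

lemma coordF_add (φ₁ φ₂ : (k × k) →ₗ[k] k) (w : V₁ ⊗[k] (k × k)) :
    coordF (φ₁ + φ₂) w = coordF φ₁ w + coordF φ₂ w := by
  induction w using TensorProduct.induction_on with
  | zero => simp
  | tmul v ab => simp [add_smul]
  | add x y hx hy => rw [map_add, map_add, map_add, hx, hy]; abel

end Aux

/-- the claim verified in the proof of Theorem 4.2 of the
paper. -/
theorem statement_9 {k G S V₁ : Type*} [Field k] [Group G] [Group S]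
    [AddCommGroup V₁] [Module k V₁]
    (H : Subgroup G) [H.Normal] (ι : S →* G ⧸ H)
    (ρ : Representation k G V₁) (ψ₁ : G →* kˣ) (v₁ : V₁)
    (hv₁ : ∀ g : G, ρ g v₁ = (ψ₁ g : k) • v₁)
    (hfix : {x : V₁ | ∀ h ∈ H, ρ h x = x} = (Submodule.span k {v₁} : Submodule k V₁))
    (χ : S →* kˣ) (δ : S → k)
    (hδadd : ∀ s t : S, δ (s * t) = δ s + δ t) (hδ0 : δ ≠ 0)
    -- the action of `S` on `V₂ = k × k`:
    (σ₂ : S → (k × k) →ₗ[k] (k × k))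
    (hσ₂ : ∀ (s : S) (ab : k × k),
      σ₂ s ab = ((χ s : k) * (ab.1 + δ s * ab.2), (χ s : k) * ab.2))
    (u : V₁ ⊗[k] (k × k))
    -- (a) `u` is fixed by `H` (acting on the first factor):
    (hu1 : ∀ h ∈ H, TensorProduct.map (ρ h) LinearMap.id u = u)
    -- (b) `g·u = s·u` for every `s ∈ S` and `g ∈ G` with `gH = ι(s)`:
    (hu2 : ∀ (s : S) (g : G), QuotientGroup.mk g = ι s →
      TensorProduct.map (ρ g) LinearMap.id u
        = TensorProduct.map LinearMap.id (σ₂ s) u) :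
    u ∈ Submodule.span k {v₁ ⊗ₜ[k] ((1, 0) : k × k)} := by
  classical
  -- both coordinates of `u` are `H`-fixed, hence lie on the line `k·v₁`
  have hmem : ∀ φ : (k × k) →ₗ[k] k, coordF φ u ∈ Submodule.span k {v₁} := by
    intro φ
    have hfx : coordF φ u ∈ {x : V₁ | ∀ h ∈ H, ρ h x = x} := by
      intro h hh
      rw [← coordF_map_left, hu1 h hh]
    rw [hfix] at hfx
    exact hfx
  obtain ⟨a, ha⟩ := Submodule.mem_span_singleton.mp (hmem (LinearMap.fst k k k))
  obtain ⟨b, hb⟩ := Submodule.mem_span_singleton.mp (hmem (LinearMap.snd k k k))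
  have hdecomp : u = (a • v₁) ⊗ₜ[k] ((1, 0) : k × k) + (b • v₁) ⊗ₜ[k] ((0, 1) : k × k) := by
    rw [ha, hb]; exact coord_decomp u
  by_cases hv0 : v₁ = 0
  · rw [hdecomp, hv0]; simp
  -- pick `s` with `δ s ≠ 0` and a lift `g` of `ι s`
  obtain ⟨s, hs⟩ : ∃ s, δ s ≠ 0 := Function.ne_iff.mp hδ0
  obtain ⟨g, hgι⟩ : ∃ g : G, QuotientGroup.mk g = ι s :=
    ⟨Quotient.out (ι s), Quotient.out_eq (ι s)⟩
  have key := hu2 s g hgι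
  have hcoef : ∀ c d : k, c • v₁ = d • v₁ → c = d := by
    intro c d h
    have h0 : (c - d) • v₁ = 0 := by rw [sub_smul, h, sub_self]
    exact sub_eq_zero.mp ((smul_eq_zero.mp h0).resolve_right hv0)
  -- first coordinate of `key`
  have ea : (ψ₁ g : k) * a = (χ s : k) * a + (χ s : k) * δ s * b := by
    have e1 := congrArg (coordF (LinearMap.fst k k k)) key
    rw [coordF_map_left, coordF_map_right] at e1
    have hφ : (LinearMap.fst k k k).comp (σ₂ s)
        = (χ s : k) • LinearMap.fst k k k + ((χ s : k) * δ s) • LinearMap.snd k k k := by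
      refine LinearMap.ext fun ab => ?_
      simp only [LinearMap.comp_apply, LinearMap.add_apply, LinearMap.smul_apply,
        LinearMap.fst_apply, LinearMap.snd_apply, hσ₂, smul_eq_mul]
      ring
    rw [hφ, coordF_add, coordF_smul, coordF_smul, ← ha, ← hb] at e1
    simp only [map_smul, hv₁, smul_smul] at e1
    have h2 := hcoef (a * (ψ₁ g : k)) ((χ s : k) * a + (χ s : k) * δ s * b)
      (by rw [add_smul]; exact e1)
    linear_combination h2
  -- second coordinate of `key`
  have eb : (ψ₁ g : k) * b = (χ s : k) * b := by
    have e1 := congrArg (coordF (LinearMap.snd k k k)) key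
    rw [coordF_map_left, coordF_map_right] at e1
    have hφ : (LinearMap.snd k k k).comp (σ₂ s) = (χ s : k) • LinearMap.snd k k k := by
      refine LinearMap.ext fun ab => ?_
      simp [hσ₂]
    rw [hφ, coordF_smul, ← hb] at e1
    simp only [map_smul, hv₁, smul_smul] at e1
    have h2 := hcoef _ _ e1
    linear_combination h2
  -- conclude `b = 0`
  have hb0 : b = 0 := by
    by_contra hb0
    have hψχ : (ψ₁ g : k) = (χ s : k) := mul_right_cancel₀ hb0 eb
    rw [hψχ] at ea
    have h0 : (χ s : k) * δ s * b = 0 := by linear_combination -ea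
    exact (mul_ne_zero (mul_ne_zero (χ s).ne_zero hs) hb0) h0
  rw [hdecomp, hb0]
  simp only [zero_smul, TensorProduct.zero_tmul, add_zero, ← TensorProduct.smul_tmul']
  exact Submodule.smul_mem _ a (Submodule.mem_span_singleton_self _)
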